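/- Let l ∈ H₁ be a nonzero linear form and let a, b, c ∈ ℝ³ \ {0} be pairwise non-proportional with l(a) = l(b) = l(c) = 0. If f ∈ P satisfies f(a) = f(b) = f(c) = 0, then there exists a quadratic form q ∈ H₂ with q(x) ≥ 0 for all x ∈ ℝ³ such that f = l²·q. -/

import Mathlib

/-!
On the plane `l = 0`, parametrize the line through two of the zeros (rescaled so that the
third zero is their sum): `f` becomes a nonnegative one-variable polynomial of degree at most
four with three real zeros, each of which is a double root since it is a minimum. Six roots
exceed the degree, so `f` vanishes on the line, hence (by homogeneity and continuity) on the
whole plane. A polynomial vanishing on the hyperplane of a linear form `l` is divisible by `l`,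
so `f = l g`. As `l` changes sign across the plane while `l g ≥ 0`, `g` vanishes there too,
so `f = l² q`, and `q ≥ 0` off the plane, hence everywhere by continuity.
-/

open MvPolynomial

noncomputable section

/-- The space of ternary (3-variable) real polynomials. `H d` corresponds to the
homogeneous polynomials of degree `d` via the predicate `IsHomogeneous`. -/
abbrev MvP : Type := MvPolynomial (Fin 3) ℝ

/-- The cone `P` of nonnegative ternary quartics. -/
def Pcone : Set MvP :=
  {f | f.IsHomogeneous 4 ∧ ∀ a : Fin 3 → ℝ, 0 ≤ eval a f}

/-- `F` is a face of the cone `P`. -/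
def IsFace (F : Set MvP) : Prop :=
  F ⊆ Pcone ∧
  (∀ a ∈ F, ∀ b ∈ F, a + b ∈ F) ∧
  (∀ c : ℝ, 0 ≤ c → ∀ a ∈ F, c • a ∈ F) ∧
  (∀ a ∈ Pcone, ∀ b ∈ Pcone, a + b ∈ F → a ∈ F ∧ b ∈ F)

/-- `J_F = {q ∈ H₂ : q² ∈ F}`. -/
def Jset (F : Set MvP) : Set MvP :=
  {q | q.IsHomogeneous 2 ∧ q ^ 2 ∈ F}

open Filter

theorem IsClosed.mem_of_forall_ne {X : Type*} [TopologicalSpace X] {s : Set X} (hs : IsClosed s)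
    {g : ℝ → X} (hg : Continuous g) {t₀ : ℝ} (h : ∀ t ≠ t₀, g t ∈ s) (t : ℝ) : g t ∈ s :=
  closure_minimal h (hs.preimage hg) ((dense_compl_singleton t₀).closure_eq ▸ Set.mem_univ t)

theorem eq_zero_of_forall_mul_nonneg {g : ℝ → ℝ} (hg : ContinuousAt g 0)
    (h : ∀ t, 0 ≤ t * g t) : g 0 = 0 := by
  have hpos : 0 ≤ g 0 := isClosed_Ici.mem_of_tendsto (hg.tendsto.mono_left nhdsWithin_le_nhds)
    (eventually_nhdsWithin_of_forall (s := Set.Ioi 0) fun t ht =>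
      nonneg_of_mul_nonneg_right (h t) ht)
  have hneg : g 0 ≤ 0 := isClosed_Iic.mem_of_tendsto (hg.tendsto.mono_left nhdsWithin_le_nhds)
    (eventually_nhdsWithin_of_forall (s := Set.Iio 0) fun t ht =>
      nonpos_of_mul_nonneg_right (h t) ht)
  exact le_antisymm hneg hpos

theorem Module.Dual.ker_eq_span_pair {K V : Type*} [Field K] [AddCommGroup V] [Module K V]
    [FiniteDimensional K V] (hV : Module.finrank K V = 3) {L : Module.Dual K V} (hL : L ≠ 0)
    {a b : V} (hab : LinearIndependent K ![a, b]) (ha : L a = 0) (hb : L b = 0) :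
    LinearMap.ker L = Submodule.span K {a, b} := by
  refine (Submodule.eq_of_le_of_finrank_le ?_ ?_).symm
  · rw [Submodule.span_le, Set.insert_subset_iff, Set.singleton_subset_iff]
    exact ⟨ha, hb⟩
  · have hker := Module.Dual.finrank_ker_add_one_of_ne_zero hL
    have hspan := finrank_span_eq_card hab
    rw [Matrix.range_cons, Matrix.range_cons, Matrix.range_empty, Set.union_empty,
      Set.union_singleton, Set.pair_comm] at hspan
    simp only [Fintype.card_fin] at hspan
    omega

namespace Polynomial

theorem one_lt_rootMultiplicity_of_nonneg {p : ℝ[X]} (hp : p ≠ 0) (hnn : ∀ x, 0 ≤ p.eval x)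
    {r : ℝ} (hr : p.eval r = 0) : 1 < p.rootMultiplicity r := by
  have hmin : IsLocalMin (fun x => p.eval x) r :=
    Eventually.of_forall fun x => by simpa only [hr] using hnn x
  rw [one_lt_rootMultiplicity_iff_isRoot hp, IsRoot, IsRoot, ← Polynomial.deriv]
  exact ⟨hr, hmin.deriv_eq_zero⟩

theorem eq_zero_of_nonneg_of_natDegree_lt {p : ℝ[X]} (hnn : ∀ x, 0 ≤ p.eval x) (S : Finset ℝ)
    (hS : ∀ r ∈ S, p.eval r = 0) (hdeg : p.natDegree < 2 * S.card) : p = 0 := by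
  by_contra hp
  have hle : 2 • S.val ≤ p.roots := by
    rw [Multiset.le_iff_count]
    intro r
    rw [Multiset.count_nsmul, count_roots]
    by_cases hr : r ∈ S
    · rw [Multiset.count_eq_one_of_mem S.nodup hr]
      exact one_lt_rootMultiplicity_of_nonneg hp hnn (hS r hr)
    · rw [Multiset.count_eq_zero_of_notMem hr]; simp
  have := (Multiset.card_le_card hle).trans (card_roots' p)
  simp only [Multiset.card_nsmul, Finset.card_val] at this
  omega

end Polynomial

namespace MvPolynomial

variable {σ R : Type*}

theorem IsHomogeneous.eval_smul [CommSemiring R] {φ : MvPolynomial σ R} {n : ℕ}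
    (hφ : φ.IsHomogeneous n) (r : R) (x : σ → R) : eval (r • x) φ = r ^ n * eval x φ := by
  conv_lhs => rw [φ.as_sum]
  conv_rhs => rw [φ.as_sum]
  simp only [map_sum, Finset.mul_sum, eval_monomial, Pi.smul_apply, smul_eq_mul, mul_pow,
    Finsupp.prod_mul]
  refine Finset.sum_congr rfl fun d hd => ?_
  have hdeg : d.degree = n := by
    rw [Finsupp.degree_eq_weight_one]; exact hφ (mem_support_iff.mp hd)
  rw [Finsupp.prod, Finset.prod_pow_eq_pow_sum, ← Finsupp.degree_apply, hdeg]
  ring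

theorem natDegree_aeval_le_totalDegree [CommSemiring R] {g : σ → Polynomial R}
    (hg : ∀ i, (g i).natDegree ≤ 1) (φ : MvPolynomial σ R) :
    (aeval g φ).natDegree ≤ φ.totalDegree := by
  conv_lhs => rw [φ.as_sum, map_sum]
  refine Polynomial.natDegree_sum_le_of_forall_le _ _ fun d hd => ?_
  rw [aeval_monomial, Algebra.algebraMap_eq_smul_one, smul_mul_assoc, one_mul]
  refine (Polynomial.natDegree_smul_le _ _).trans ?_
  refine (Polynomial.natDegree_prod_le _ _).trans ?_
  refine le_trans ?_ (le_totalDegree hd)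
  refine Finset.sum_le_sum fun i _ => Polynomial.natDegree_pow_le.trans ?_
  simpa using Nat.mul_le_mul_left (d i) (hg i)

theorem polynomial_eval_aeval [CommSemiring R] (g : σ → Polynomial R) (φ : MvPolynomial σ R)
    (s : R) : (aeval g φ).eval s = eval (fun i => (g i).eval s) φ := by
  rw [aeval_def, polynomial_eval_eval₂]
  congr 1
  ext r; simp

theorem IsHomogeneous.exists_linearMap_eq_eval [CommSemiring R] [Fintype σ]
    {l : MvPolynomial σ R} (hl : l.IsHomogeneous 1) :
    ∃ L : (σ → R) →ₗ[R] R, ∀ x, eval x l = L x := by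
  rw [← mem_homogeneousSubmodule, homogeneousSubmodule_one_eq_span_X,
    Submodule.mem_span_range_iff_exists_fun] at hl
  obtain ⟨c, rfl⟩ := hl
  exact ⟨∑ i, c i • LinearMap.proj i, fun x => by simp⟩

theorem exists_eval_ne_zero [CommRing R] [IsDomain R] [Infinite R] {p : MvPolynomial σ R}
    (hp : p ≠ 0) : ∃ x, eval x p ≠ 0 := by
  contrapose! hp
  exact funext fun x => by simpa using hp x

theorem IsHomogeneous.of_mul_left [CommRing R] [IsDomain R] {φ ψ : MvPolynomial σ R} {m n : ℕ}
    (hφ : φ.IsHomogeneous m) (hφ0 : φ ≠ 0) (h : (φ * ψ).IsHomogeneous (m + n)) :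
    ψ.IsHomogeneous n := by
  have hcomp : ∀ k, homogeneousComponent (m + k) (φ * ψ) = φ * homogeneousComponent k ψ := by
    intro k
    let := gradedAlgebra (σ := σ) (R := R)
    have := DirectSum.coe_decompose_mul_of_left_mem_of_le (𝒜 := homogeneousSubmodule σ R)
      (b := ψ) hφ (Nat.le_add_right m k)
    rw [Nat.add_sub_cancel_left] at this
    rw [← decomposition.decompose'_apply, ← decomposition.decompose'_apply]
    exact this
  have hvanish : ∀ k ≠ n, homogeneousComponent k ψ = 0 := fun k hk => by
    have : φ * homogeneousComponent k ψ = 0 := by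
      rw [← hcomp, homogeneousComponent_of_mem h, if_neg (by omega)]
    exact (mul_eq_zero.mp this).resolve_left hφ0
  have hψ : ψ = homogeneousComponent n ψ := by
    ext d
    rw [coeff_homogeneousComponent]
    split_ifs with hd
    · rfl
    · simpa [coeff_homogeneousComponent] using congrArg (coeff d) (hvanish d.degree hd)
  exact hψ ▸ homogeneousComponent_isHomogeneous n ψ

theorem IsHomogeneous.dvd_of_forall_eval_eq_zero [Fintype σ] {K : Type*} [Field K] [Infinite K]
    {l g : MvPolynomial σ K} (hl : l.IsHomogeneous 1) (hl0 : l ≠ 0)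
    (hg : ∀ x, eval x l = 0 → eval x g = 0) : l ∣ g := by
  obtain ⟨L, hL⟩ := hl.exists_linearMap_eq_eval
  obtain ⟨w, hw⟩ := exists_eval_ne_zero hl0
  rw [hL] at hw
  -- `bind₁ ψ` is the identity modulo `l` and moves every point onto the hyperplane `l = 0`.
  set ψ : σ → MvPolynomial σ K := fun i => X i - C (w i / L w) * l
  have hcong : l ∣ g - bind₁ ψ g := by
    rw [← Ideal.mem_span_singleton, ← Ideal.Quotient.mk_eq_mk_iff_sub_mem]
    have : (Ideal.Quotient.mkₐ K (Ideal.span {l})).comp (bind₁ ψ) = Ideal.Quotient.mkₐ K _ := by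
      ext i
      simp [ψ]
    exact (DFunLike.congr_fun this g).symm
  have hzero : bind₁ ψ g = 0 := by
    refine MvPolynomial.funext fun x => ?_
    show MvPolynomial.aeval x (bind₁ ψ g) = MvPolynomial.aeval x 0
    rw [aeval_bind₁, map_zero]
    have hy : (fun i => eval x (ψ i)) = x - (eval x l / L w) • w := by
      ext i
      simp only [ψ, map_sub, map_mul, eval_X, eval_C, Pi.sub_apply, Pi.smul_apply, smul_eq_mul]
      ring
    apply hg
    change eval (fun i => eval x (ψ i)) l = 0
    rw [hy, hL, map_sub, map_smul, ← hL, smul_eq_mul, div_mul_cancel₀ _ hw, sub_self]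
  simpa [hzero] using hcong

theorem IsHomogeneous.eval_eq_zero_of_eval_mul_nonneg [Fintype σ] {l g : MvPolynomial σ ℝ}
    (hl : l.IsHomogeneous 1) (hl0 : l ≠ 0) (hnn : ∀ x, 0 ≤ eval x (l * g)) {x : σ → ℝ}
    (hx : eval x l = 0) : eval x g = 0 := by
  obtain ⟨L, hL⟩ := hl.exists_linearMap_eq_eval
  obtain ⟨w, hw⟩ := exists_eval_ne_zero hl0
  rw [hL] at hw hx
  have h := eq_zero_of_forall_mul_nonneg (g := fun t => L w * eval (x + t • w) g)
    (continuous_const.mul ((continuous_eval g).comp (by fun_prop))).continuousAt fun t => by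
      simpa only [eval_mul, hL, map_add, map_smul, hx, smul_eq_mul, zero_add, mul_assoc]
        using hnn (x + t • w)
  simpa [hw] using h

theorem IsHomogeneous.eval_nonneg_of_eval_sq_mul_nonneg [Fintype σ] {l q : MvPolynomial σ ℝ}
    (hl : l.IsHomogeneous 1) (hl0 : l ≠ 0) (hnn : ∀ x, 0 ≤ eval x (l ^ 2 * q)) (x : σ → ℝ) :
    0 ≤ eval x q := by
  obtain ⟨L, hL⟩ := hl.exists_linearMap_eq_eval
  obtain ⟨w, hw⟩ := exists_eval_ne_zero hl0
  rw [hL] at hw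
  have hoff : ∀ y, L y ≠ 0 → 0 ≤ eval y q := fun y hy =>
    nonneg_of_mul_nonneg_right (by simpa only [eval_mul, eval_pow, hL] using hnn y)
      (sq_pos_of_ne_zero hy)
  have h := isClosed_Ici.mem_of_forall_ne (g := fun t => eval (x + t • w) q)
    ((continuous_eval q).comp (by fun_prop))
    (t₀ := -(L x / L w)) (fun t ht => hoff _ ?_) 0
  · simpa using h
  · rw [map_add, map_smul, smul_eq_mul]
    contrapose! ht
    field_simp
    linarith

theorem IsHomogeneous.eval_smul_add_smul_eq_zero {f : MvPolynomial σ ℝ} {n : ℕ}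
    (hf : f.IsHomogeneous n) (hn : n < 6) (hnn : ∀ x, 0 ≤ eval x f) {a b : σ → ℝ}
    (ha : eval a f = 0) (hb : eval b f = 0) (hab : eval (a + b) f = 0) (p q : ℝ) :
    eval (p • a + q • b) f = 0 := by
  set ρ : Polynomial ℝ :=
    MvPolynomial.aeval (fun i => Polynomial.C (b i - a i) * Polynomial.X + Polynomial.C (a i)) f
  have hρ : ∀ s : ℝ, ρ.eval s = eval (a + s • (b - a)) f := fun s => by
    rw [polynomial_eval_aeval]
    congr 2 with i
    simp only [Polynomial.eval_add, Polynomial.eval_mul, Polynomial.eval_C, Polynomial.eval_X,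
      Pi.add_apply, Pi.smul_apply, Pi.sub_apply, smul_eq_mul]
    ring
  have hline : ∀ s : ℝ, eval (a + s • (b - a)) f = 0 := by
    have hρ0 : ρ = 0 := by
      refine Polynomial.eq_zero_of_nonneg_of_natDegree_lt (fun s => hρ s ▸ hnn _) {0, 1 / 2, 1}
        ?_ ?_
      · intro r hr
        simp only [Finset.mem_insert, Finset.mem_singleton] at hr
        rcases hr with rfl | rfl | rfl
        · simpa [hρ] using ha
        · have : a + (1 / 2 : ℝ) • (b - a) = (1 / 2 : ℝ) • (a + b) := by module
          rw [hρ, this, hf.eval_smul, hab, mul_zero]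
        · simpa [hρ] using hb
      · have hdeg : ρ.natDegree ≤ n :=
          (natDegree_aeval_le_totalDegree (fun i => Polynomial.natDegree_linear_le) f).trans
            hf.totalDegree_le
        rw [Finset.card_insert_of_notMem (by norm_num), Finset.card_pair (by norm_num)]
        omega
    intro s
    rw [← hρ, hρ0, Polynomial.eval_zero]
  have hoff : ∀ p q : ℝ, p + q ≠ 0 → eval (p • a + q • b) f = 0 := fun p q hpq => by
    have : p • a + q • b = (p + q) • (a + (q / (p + q)) • (b - a)) := by
      ext i
      simp only [Pi.add_apply, Pi.smul_apply, smul_eq_mul, Pi.sub_apply]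
      field_simp
      ring
    rw [this, hf.eval_smul, hline, mul_zero]
  have h := (isClosed_singleton (x := (0 : ℝ))).mem_of_forall_ne
    (g := fun t => eval ((p + t) • a + q • b) f) ((continuous_eval f).comp (by fun_prop))
    (t₀ := -(p + q))
    (fun t ht => hoff _ _ (by contrapose! ht; linarith)) 0
  simpa using h

theorem IsHomogeneous.eval_eq_zero_of_mem_span {f : MvPolynomial σ ℝ} {n : ℕ}
    (hf : f.IsHomogeneous n) (hn : n < 6) (hnn : ∀ x, 0 ≤ eval x f) {a b c : σ → ℝ}
    (hc : c ≠ 0) (hac : ∀ t : ℝ, a ≠ t • c) (hbc : ∀ t : ℝ, b ≠ t • c)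
    (hcab : c ∈ Submodule.span ℝ {a, b}) (ha : eval a f = 0) (hb : eval b f = 0)
    (hcf : eval c f = 0) {x : σ → ℝ} (hx : x ∈ Submodule.span ℝ {a, b}) : eval x f = 0 := by
  -- after rescaling `a` and `b`, the third zero is their sum
  obtain ⟨α, β, rfl⟩ := Submodule.mem_span_pair.mp hcab
  have hβ : β ≠ 0 := by
    rintro rfl
    have hα : α ≠ 0 := by rintro rfl; simp at hc
    exact hac α⁻¹ (by simp [smul_smul, hα])
  have hα : α ≠ 0 := by
    rintro rfl
    exact hbc β⁻¹ (by simp [smul_smul, hβ])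
  obtain ⟨p, q, rfl⟩ := Submodule.mem_span_pair.mp hx
  have := hf.eval_smul_add_smul_eq_zero hn hnn (a := α • a) (b := β • b)
    (by rw [hf.eval_smul, ha, mul_zero]) (by rw [hf.eval_smul, hb, mul_zero]) hcf (p / α) (q / β)
  rwa [smul_smul, smul_smul, div_mul_cancel₀ _ hα, div_mul_cancel₀ _ hβ] at this

end MvPolynomial

theorem stmt_8 (l : MvP) (hl : l.IsHomogeneous 1) (hl0 : l ≠ 0)
    (a b c : Fin 3 → ℝ) (hb : b ≠ 0) (hc : c ≠ 0)
    (hab : ∀ t : ℝ, a ≠ t • b) (hac : ∀ t : ℝ, a ≠ t • c) (hbc : ∀ t : ℝ, b ≠ t • c)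
    (hla : eval a l = 0) (hlb : eval b l = 0) (hlc : eval c l = 0)
    (f : MvP) (hf : f ∈ Pcone)
    (hfa : eval a f = 0) (hfb : eval b f = 0) (hfc : eval c f = 0) :
    ∃ q : MvP, q.IsHomogeneous 2 ∧ (∀ x : Fin 3 → ℝ, 0 ≤ eval x q) ∧ f = l ^ 2 * q := by
  obtain ⟨hf4, hfnn⟩ := hf
  obtain ⟨L, hL⟩ := hl.exists_linearMap_eq_eval
  have hL0 : L ≠ 0 := by
    obtain ⟨w, hw⟩ := exists_eval_ne_zero hl0
    exact fun h => hw (by simp [hL, h])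
  have hker : LinearMap.ker L = Submodule.span ℝ {a, b} :=
    Module.Dual.ker_eq_span_pair (by simp) hL0
      (linearIndependent_fin2.mpr ⟨hb, fun t => (hab t).symm⟩) ((hL a).symm.trans hla)
      ((hL b).symm.trans hlb)
  have hfl : ∀ x, eval x l = 0 → eval x f = 0 := fun x hx =>
    hf4.eval_eq_zero_of_mem_span (by norm_num) hfnn hc hac hbc (hker ▸ (hL c).symm.trans hlc)
      hfa hfb hfc (hker ▸ (hL x).symm.trans hx)
  obtain ⟨g, rfl⟩ := hl.dvd_of_forall_eval_eq_zero hl0 hfl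
  obtain ⟨q, rfl⟩ := hl.dvd_of_forall_eval_eq_zero hl0 fun x =>
    hl.eval_eq_zero_of_eval_mul_nonneg hl0 hfnn
  rw [← mul_assoc, ← sq] at hf4 hfnn ⊢
  exact ⟨q, (hl.pow 2).of_mul_left (pow_ne_zero 2 hl0) hf4,
    hl.eval_nonneg_of_eval_sq_mul_nonneg hl0 hfnn, rfl⟩
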